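/- arXiv:2501.00849 — 2 statements merged into one kernel-verified Lean document; each statement's English description precedes it below -/
import Mathlib

section
/- Let δ ≥ 0 and 1 < p⁻ ≤ p⁺ < ∞. There exists a constant c > 0, depending only on p⁻, p⁺ and δ, such that for every exponent p ∈ [p⁻, p⁺], every shift a ≥ 0 and every r ≥ 0 one has ((φ_p)_a)*(2r) ≤ c · 2^{max{2, (p⁻)'}} · ((φ_p)_a)*(r), where (p⁻)' := p⁻/(p⁻−1); in particular the conjugates ((φ_p)_a)* satisfy the Δ₂-condition uniformly in a ≥ 0 and p ∈ [p⁻, p⁺]. -/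
open MeasureTheory

/-- The shifted N-function `(φ_p)_a(r) = ∫₀^r (δ+a+s)^{p-2} s ds`. -/
noncomputable def phiShift (δ p a r : ℝ) : ℝ :=
  ∫ s in (0:ℝ)..r, (δ + a + s) ^ (p - 2) * s

/-- The Fenchel conjugate `ψ*(r) = sup_{s ≥ 0} (r·s − ψ(s))`. -/
noncomputable def fconj (ψ : ℝ → ℝ) (r : ℝ) : ℝ :=
  ⨆ s : NNReal, (r * (s : ℝ) - ψ (s : ℝ))

/-!
Put `ψ = (φ_p)_a` and `q = min 2 p⁻`. The integrand `f(u) = (δ + a + u)^(p-2) u` satisfies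
`f(l u) ≤ l^(q-1) f(u)` for `0 < l ≤ 1`, hence `ψ(l t) ≤ l^q ψ(t)`. Choosing `l = 2^(-1/(q-1))`,
so that `2 l^q = l`, gives `l^q (2 r s - ψ s) ≤ r (l s) - ψ (l s) ≤ ψ*(r)` for every `s ≥ 0`, i.e.
`ψ*(2r) ≤ l^(-q) ψ*(r) = 2^(q/(q-1)) ψ*(r)`, and `q/(q-1) = max 2 (p⁻)'`; so `c = 1` works.
The same scaling gives `ψ(t) ≥ t^q ψ(1)` for `t ≥ 1`, which keeps the supremum defining `ψ*(r)`
finite (an unbounded `⨆` would be the junk value `0`).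
-/

open Filter Set

section Conjugate

variable {ψ : ℝ → ℝ} {q : ℝ}

lemma rpow_mul_le_of_scaling
    (hψ : ∀ l t, 0 < l → l ≤ 1 → 0 ≤ t → ψ (l * t) ≤ l ^ q * ψ t) {t : ℝ} (ht : 1 ≤ t) :
    t ^ q * ψ 1 ≤ ψ t := by
  have ht0 : 0 < t := one_pos.trans_le ht
  have h := hψ t⁻¹ t (inv_pos.2 ht0) (inv_le_one_of_one_le₀ ht) ht0.le
  rwa [inv_mul_cancel₀ ht0.ne', Real.inv_rpow ht0.le, le_inv_mul_iff₀ (by positivity)] at h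

lemma eventually_mul_le_of_scaling (hq : 1 < q)
    (hψ : ∀ l t, 0 < l → l ≤ 1 → 0 ≤ t → ψ (l * t) ≤ l ^ q * ψ t) (hψ1 : 0 < ψ 1) (r : ℝ) :
    ∀ᶠ s in atTop, r * s ≤ ψ s := by
  filter_upwards [eventually_ge_atTop 1,
    (tendsto_rpow_atTop (sub_pos.2 hq)).eventually_ge_atTop (r / ψ 1)] with s hs1 hs
  have hs0 : 0 < s := one_pos.trans_le hs1
  calc r * s = r / ψ 1 * s * ψ 1 := by field_simp
    _ ≤ s ^ (q - 1) * s * ψ 1 := by gcongr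
    _ = s ^ q * ψ 1 := by rw [Real.rpow_sub_one hs0.ne', div_mul_cancel₀ _ hs0.ne']
    _ ≤ ψ s := rpow_mul_le_of_scaling hψ hs1

lemma bddAbove_range_mul_sub {r : ℝ} (hψ0 : ∀ s, 0 ≤ s → 0 ≤ ψ s)
    (h : ∀ᶠ s in atTop, r * s ≤ ψ s) :
    BddAbove (range fun s : NNReal ↦ r * (s : ℝ) - ψ s) := by
  obtain ⟨S, hS⟩ := eventually_atTop.1 h
  refine ⟨|r| * |S|, ?_⟩
  rintro _ ⟨s, rfl⟩
  rcases le_total S s with hs | hs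
  · linarith [hS s hs, mul_nonneg (abs_nonneg r) (abs_nonneg S)]
  · have hrs : r * s ≤ |r| * |S| :=
      calc r * s ≤ |r| * s := mul_le_mul_of_nonneg_right (le_abs_self r) s.2
        _ ≤ |r| * |S| := mul_le_mul_of_nonneg_left (hs.trans (le_abs_self S)) (abs_nonneg r)
    linarith [hψ0 s s.2]

lemma fconj_mul_le_of_scaling {Λ r : ℝ} (hΛ : 1 ≤ Λ) (hq : 1 < q)
    (hψ : ∀ l t, 0 < l → l ≤ 1 → 0 ≤ t → ψ (l * t) ≤ l ^ q * ψ t)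
    (hbdd : BddAbove (range fun s : NNReal ↦ r * (s : ℝ) - ψ s)) :
    fconj ψ (Λ * r) ≤ Λ ^ (q / (q - 1)) * fconj ψ r := by
  have hΛ0 : 0 < Λ := one_pos.trans_le hΛ
  set l := Λ ^ (-(q - 1)⁻¹) with hl
  have hl0 : 0 < l := Real.rpow_pos_of_pos hΛ0 _
  have hl1 : l ≤ 1 :=
    Real.rpow_le_one_of_one_le_of_nonpos hΛ (neg_nonpos.2 (inv_nonneg.2 (by linarith)))
  have hlq : l ^ q = (Λ ^ (q / (q - 1)))⁻¹ := by
    rw [hl, ← Real.rpow_mul hΛ0.le, ← Real.rpow_neg hΛ0.le]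
    ring_nf
  have hlqΛ : l ^ q * Λ = l := by
    have h : l ^ (q - 1) * Λ = 1 := by
      rw [hl, ← Real.rpow_mul hΛ0.le, neg_mul, inv_mul_cancel₀ (by linarith),
        Real.rpow_neg_one, inv_mul_cancel₀ hΛ0.ne']
    rw [Real.rpow_sub_one hl0.ne'] at h
    field_simp at h
    exact h
  refine ciSup_le fun s ↦ ?_
  have hs : l ^ q * (Λ * r * s - ψ s) ≤ fconj ψ r :=
    calc l ^ q * (Λ * r * s - ψ s) ≤ r * (l * s) - ψ (l * s) := by
          have := hψ l s hl0 hl1 s.2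
          linear_combination (r * s) * hlqΛ + this
      _ ≤ fconj ψ r := le_ciSup hbdd ⟨l * s, mul_nonneg hl0.le s.2⟩
  rwa [hlq, inv_mul_le_iff₀ (by positivity)] at hs

end Conjugate

lemma rpow_sub_two_mul_mul_le {c p q l u : ℝ} (hc : 0 ≤ c) (hq2 : q ≤ 2) (hqp : q ≤ p)
    (hl0 : 0 < l) (hl1 : l ≤ 1) (hu : 0 ≤ u) :
    (c + l * u) ^ (p - 2) * (l * u) ≤ l ^ (q - 1) * ((c + u) ^ (p - 2) * u) := by
  rcases hu.eq_or_lt with rfl | hu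
  · simp
  suffices h : (c + l * u) ^ (p - 2) * l ≤ l ^ (q - 1) * (c + u) ^ (p - 2) by
    calc (c + l * u) ^ (p - 2) * (l * u) = (c + l * u) ^ (p - 2) * l * u := by ring
      _ ≤ l ^ (q - 1) * (c + u) ^ (p - 2) * u := by gcongr
      _ = _ := by ring
  have hlu : l * u ≤ u := mul_le_of_le_one_left hu.le hl1
  rcases le_total 2 p with hp | hp
  · have hl : l ≤ l ^ (q - 1) := by
      simpa using Real.rpow_le_rpow_of_exponent_ge hl0 hl1 (show q - 1 ≤ 1 by linarith)
    calc (c + l * u) ^ (p - 2) * l ≤ (c + u) ^ (p - 2) * l ^ (q - 1) := by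
          gcongr (?_ : ℝ) * ?_
          exact Real.rpow_le_rpow (by positivity) (by linarith) (by linarith)
      _ = _ := mul_comm _ _
  · have hbase : l * (c + u) ≤ c + l * u := by nlinarith
    calc (c + l * u) ^ (p - 2) * l ≤ (l * (c + u)) ^ (p - 2) * l ^ (1 : ℝ) := by
          rw [Real.rpow_one]
          gcongr (?_ : ℝ) * _
          exact Real.rpow_le_rpow_of_nonpos (by positivity) hbase (by linarith)
      _ = l ^ (p - 1) * (c + u) ^ (p - 2) := by
          rw [Real.mul_rpow hl0.le (by positivity), mul_right_comm, ← Real.rpow_add hl0]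
          ring_nf
      _ ≤ l ^ (q - 1) * (c + u) ^ (p - 2) := by
          gcongr (?_ : ℝ) * _
          exact Real.rpow_le_rpow_of_exponent_ge hl0 hl1 (by linarith)

lemma monotoneOn_rpow_sub_two_mul {c p : ℝ} (hc : 0 ≤ c) (hp : 1 ≤ p) :
    MonotoneOn (fun u ↦ (c + u) ^ (p - 2) * u) (Ici 0) := by
  intro u hu v _ huv
  rcases (show (0 : ℝ) ≤ u from hu).eq_or_lt with rfl | hu
  · simpa using mul_nonneg (Real.rpow_nonneg (by linarith) (p - 2)) (hu.trans huv)
  have hv : 0 < v := hu.trans_le huv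
  -- the scaling estimate with exponent `q = 1`, applied to `l = u / v`
  simpa [div_mul_cancel₀ u hv.ne'] using rpow_sub_two_mul_mul_le hc one_le_two hp
    (div_pos hu hv) ((div_le_one hv).2 huv) hv.le

section phiShift

variable {δ p a : ℝ}

lemma phiShift_nonneg (hc : 0 ≤ δ + a) {t : ℝ} (ht : 0 ≤ t) : 0 ≤ phiShift δ p a t :=
  intervalIntegral.integral_nonneg ht fun u hu ↦
    mul_nonneg (Real.rpow_nonneg (by linarith [hu.1]) _) hu.1

lemma intervalIntegrable_phiShift_integrand (hc : 0 ≤ δ + a) (hp : 1 ≤ p) {t : ℝ}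
    (ht : 0 ≤ t) : IntervalIntegrable (fun u ↦ (δ + a + u) ^ (p - 2) * u) volume 0 t :=
  ((monotoneOn_rpow_sub_two_mul hc hp).mono fun _ hu ↦
    (le_min le_rfl ht).trans (mem_Icc.1 hu).1).intervalIntegrable

lemma phiShift_one_pos (hc : 0 ≤ δ + a) (hp : 1 ≤ p) : 0 < phiShift δ p a 1 :=
  intervalIntegral.intervalIntegral_pos_of_pos_on
    (intervalIntegrable_phiShift_integrand hc hp zero_le_one)
    (fun u hu ↦ mul_pos (Real.rpow_pos_of_pos (by linarith [hu.1]) _) hu.1) one_pos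

lemma phiShift_mul_le {q l t : ℝ} (hc : 0 ≤ δ + a) (hp : 1 ≤ p) (hq2 : q ≤ 2) (hqp : q ≤ p)
    (hl0 : 0 < l) (hl1 : l ≤ 1) (ht : 0 ≤ t) :
    phiShift δ p a (l * t) ≤ l ^ q * phiShift δ p a t := by
  have hint := intervalIntegrable_phiShift_integrand hc hp ht
  have hint_comp :
      IntervalIntegrable (fun u ↦ (δ + a + l * u) ^ (p - 2) * (l * u)) volume 0 t := by
    simpa [hl0.ne'] using
      (intervalIntegrable_phiShift_integrand hc hp (by positivity : 0 ≤ l * t)).comp_mul_left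
        (c := l)
  calc phiShift δ p a (l * t)
      = l * ∫ u in (0 : ℝ)..t, (δ + a + l * u) ^ (p - 2) * (l * u) := by
        simpa [phiShift] using
          (intervalIntegral.smul_integral_comp_mul_left
            (fun u ↦ (δ + a + u) ^ (p - 2) * u) l (a := 0) (b := t)).symm
    _ ≤ l * ∫ u in (0 : ℝ)..t, l ^ (q - 1) * ((δ + a + u) ^ (p - 2) * u) := by
        gcongr
        exact intervalIntegral.integral_mono_on ht hint_comp (hint.const_mul _)
          fun u hu ↦ rpow_sub_two_mul_mul_le hc hq2 hqp hl0 hl1 hu.1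
    _ = l ^ q * phiShift δ p a t := by
        rw [intervalIntegral.integral_const_mul, ← mul_assoc, phiShift]
        congr 1
        rw [Real.rpow_sub_one hl0.ne', mul_div_cancel₀ _ hl0.ne']

end phiShift

lemma min_two_div_min_two_sub_one {p : ℝ} (hp : 1 < p) :
    min 2 p / (min 2 p - 1) = max 2 (p / (p - 1)) := by
  have hp1 : 0 < p - 1 := sub_pos.2 hp
  rcases le_total p 2 with h | h
  · rw [min_eq_right h, max_eq_right ((le_div_iff₀ hp1).2 (by linarith))]
  · rw [min_eq_left h, max_eq_left ((div_le_iff₀ hp1).2 (by linarith))]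
    norm_num

theorem stmt3_general (δ pm pp : ℝ) (hδ : 0 ≤ δ) (hpm : 1 < pm) :
    ∃ c : ℝ, 0 < c ∧ ∀ p : ℝ, pm ≤ p → p ≤ pp → ∀ a : ℝ, 0 ≤ a → ∀ r : ℝ, 0 ≤ r →
      fconj (phiShift δ p a) (2 * r) ≤
        c * (2 : ℝ) ^ (max 2 (pm / (pm - 1))) * fconj (phiShift δ p a) r := by
  refine ⟨1, one_pos, fun p hpmp _ a ha r _ ↦ ?_⟩
  have hc : 0 ≤ δ + a := add_nonneg hδ ha
  have hp : 1 ≤ p := (hpm.trans_le hpmp).le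
  have hscale : ∀ l t, 0 < l → l ≤ 1 → 0 ≤ t →
      phiShift δ p a (l * t) ≤ l ^ min 2 pm * phiShift δ p a t := fun _ _ hl0 hl1 ht ↦
    phiShift_mul_le hc hp (min_le_left _ _) ((min_le_right _ _).trans hpmp) hl0 hl1 ht
  have hq : 1 < min 2 pm := lt_min one_lt_two hpm
  have hbdd := bddAbove_range_mul_sub (fun _ hs ↦ phiShift_nonneg hc hs)
    (eventually_mul_le_of_scaling hq hscale (phiShift_one_pos hc hp) r)
  rw [one_mul, ← min_two_div_min_two_sub_one hpm]
  exact fconj_mul_le_of_scaling one_le_two hq hscale hbdd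

theorem stmt3 (δ pm pp : ℝ) (hδ : 0 ≤ δ) (hpm : 1 < pm) (hpmpp : pm ≤ pp) :
    ∃ c : ℝ, 0 < c ∧ ∀ p : ℝ, pm ≤ p → p ≤ pp → ∀ a : ℝ, 0 ≤ a → ∀ r : ℝ, 0 ≤ r →
      fconj (phiShift δ p a) (2 * r) ≤
        c * (2 : ℝ) ^ (max 2 (pm / (pm - 1))) * fconj (phiShift δ p a) r :=
  stmt3_general δ pm pp hδ hpm
end

section
/- Let d ≥ 1, δ ≥ 0 and 1 < p⁻ ≤ p⁺ < ∞. There exists a constant c ≥ 1, depending only on d, p⁻, p⁺ and δ, such that for every exponent p ∈ [p⁻, p⁺] and all matrices A, B ∈ ℝ^{d×d}: c⁻¹ (φ_p)_{|A^sym|}(|A^sym − B^sym|) ≤ |F_p(A) − F_p(B)|² ≤ c (φ_p)_{|A^sym|}(|A^sym − B^sym|). -/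
/-!
Write `X = A^sym`, `Y = B^sym`, `q = (p - 2)/2` and `g(x) = (δ + x)^q x`. Both
`|F_p(A) - F_p(B)|²` and `(δ + |X| + |Y|)^(p-2) |X - Y|²` are affine functions of
`X : Y ∈ [-|X||Y|, |X||Y|]`, so it suffices to compare them at the two endpoints, that is, to show
`g(s) ∓ g(t) ∼ (δ + s + t)^q (s ∓ t)`; this follows from Bernoulli's inequality for the exponent
`q + 1 > 0`. Since the integrand of `(φ_p)_a` is increasing, `(φ_p)_a(r) ∼ (δ + a + r)^(p-2) r²`,
and `δ + |X| + |Y| ∼ δ + |X| + |X - Y|` by the triangle inequality. All constants depend only on an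
upper bound for `|p - 2|` and a lower bound for `p`, hence are uniform for `p ∈ [p⁻, p⁺]`.
-/

open MeasureTheory

/-- The symmetric part `A^sym := ½(A + Aᵀ)`. -/
noncomputable def msym {d : ℕ} (A : Matrix (Fin d) (Fin d) ℝ) : Matrix (Fin d) (Fin d) ℝ :=
  (2 : ℝ)⁻¹ • (A + A.transpose)

/-- The Frobenius norm of a matrix. -/
noncomputable def frob {d : ℕ} (A : Matrix (Fin d) (Fin d) ℝ) : ℝ :=
  Real.sqrt (∑ i, ∑ j, (A i j) ^ 2)

/-- `F_p(A) := (δ+|A^sym|)^{(p−2)/2} A^sym`. -/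
noncomputable def Fmap {d : ℕ} (δ p : ℝ) (A : Matrix (Fin d) (Fin d) ℝ) :
    Matrix (Fin d) (Fin d) ℝ :=
  ((δ + frob (msym A)) ^ ((p - 2) / 2)) • msym A

open Set

/-- `x ∼ y` with explicit constant `K`. -/
def Comparable (K x y : ℝ) : Prop := x ≤ K * y ∧ y ≤ K * x

namespace Comparable

variable {K L x y z x' y' : ℝ}

theorem symm (h : Comparable K x y) : Comparable K y x := ⟨h.2, h.1⟩

theorem trans (hK : 0 ≤ K) (hL : 0 ≤ L) (h₁ : Comparable K x y) (h₂ : Comparable L y z) :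
    Comparable (K * L) x z := by
  constructor
  · calc x ≤ K * y := h₁.1
      _ ≤ K * (L * z) := mul_le_mul_of_nonneg_left h₂.1 hK
      _ = K * L * z := by ring
  · calc z ≤ L * y := h₂.2
      _ ≤ L * (K * x) := mul_le_mul_of_nonneg_left h₁.2 hL
      _ = K * L * x := by ring

theorem mono (h : Comparable K x y) (hKL : K ≤ L) (hx : 0 ≤ x) (hy : 0 ≤ y) :
    Comparable L x y :=
  ⟨h.1.trans (mul_le_mul_of_nonneg_right hKL hy), h.2.trans (mul_le_mul_of_nonneg_right hKL hx)⟩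

theorem mul (h : Comparable K x y) (h' : Comparable L x' y') (hx : 0 ≤ x) (hy : 0 ≤ y)
    (hx' : 0 ≤ x') (hy' : 0 ≤ y') : Comparable (K * L) (x * x') (y * y') := by
  constructor
  · calc x * x' ≤ (K * y) * (L * y') := mul_le_mul h.1 h'.1 hx' (hx.trans h.1)
      _ = K * L * (y * y') := by ring
  · calc y * y' ≤ (K * x) * (L * x') := mul_le_mul h.2 h'.2 hy' (hy.trans h.2)
      _ = K * L * (x * x') := by ring

theorem mul_right (h : Comparable K x y) {c : ℝ} (hc : 0 ≤ c) : Comparable K (x * c) (y * c) :=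
  ⟨by nlinarith [h.1], by nlinarith [h.2]⟩

theorem sq (h : Comparable K x y) (hx : 0 ≤ x) (hy : 0 ≤ y) :
    Comparable (K ^ 2) (x ^ 2) (y ^ 2) := by
  simpa only [pow_two] using h.mul h hx hy hx hy

theorem of_affine {α β γ η v₀ v₁ u : ℝ} (h₀ : Comparable K (α + β * v₀) (γ + η * v₀))
    (h₁ : Comparable K (α + β * v₁) (γ + η * v₁)) (hu : u ∈ Icc v₀ v₁) :
    Comparable K (α + β * u) (γ + η * u) := by
  have key : ∀ m k : ℝ, 0 ≤ m * v₀ + k → 0 ≤ m * v₁ + k → 0 ≤ m * u + k := by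
    intro m k h₀ h₁
    rcases le_total 0 m with hm | hm <;> nlinarith [hu.1, hu.2]
  constructor
  · linarith [key (K * η - β) (K * γ - α) (by linarith [h₀.1]) (by linarith [h₁.1])]
  · linarith [key (K * β - η) (K * α - γ) (by linarith [h₀.2]) (by linarith [h₁.2])]

theorem rpow_le (hK : 1 ≤ K) (hx : 0 ≤ x) (h : Comparable K x y) (z : ℝ) :
    x ^ z ≤ K ^ |z| * y ^ z := by
  have hK₀ : 0 < K := by linarith
  rcases le_total 0 z with hz | hz
  · calc x ^ z ≤ (K * y) ^ z := Real.rpow_le_rpow hx h.1 hz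
      _ = K ^ |z| * y ^ z := by
        rw [abs_of_nonneg hz, Real.mul_rpow hK₀.le (by nlinarith [h.1, h.2])]
  rcases (show 0 ≤ y by nlinarith [h.1, h.2]).eq_or_lt with rfl | hy
  · obtain rfl : x = 0 := le_antisymm (by simpa using h.1) hx
    exact le_mul_of_one_le_left (Real.rpow_nonneg le_rfl z) (Real.one_le_rpow hK (abs_nonneg z))
  · calc x ^ z ≤ (y / K) ^ z :=
          Real.rpow_le_rpow_of_nonpos (div_pos hy hK₀) ((div_le_iff₀' hK₀).2 h.2) hz
      _ = K ^ |z| * y ^ z := by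
        rw [Real.div_rpow hy.le hK₀.le, abs_of_nonpos hz, Real.rpow_neg hK₀.le, div_eq_inv_mul]

theorem rpow (hK : 1 ≤ K) (hx : 0 ≤ x) (hy : 0 ≤ y) (h : Comparable K x y) (z : ℝ) :
    Comparable (K ^ |z|) (x ^ z) (y ^ z) :=
  ⟨h.rpow_le hK hx z, h.symm.rpow_le hK hy z⟩

end Comparable

theorem abs_rpow_sub_self_le {τ q : ℝ} (hτ₀ : 0 < τ) (hτ₁ : τ ≤ 1) (hq : -1 ≤ q) :
    |τ ^ (q + 1) - τ| ≤ |q| * (1 - τ) := by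
  have hs : -1 ≤ τ - 1 := by linarith
  rcases le_total 0 q with hq₀ | hq₀
  · have bernoulli := one_add_mul_self_le_rpow_one_add hs (p := q + 1) (by linarith)
    have hle : τ ^ (q + 1) ≤ τ := by
      simpa using Real.rpow_le_rpow_of_exponent_ge hτ₀ hτ₁ (show (1 : ℝ) ≤ q + 1 by linarith)
    rw [add_sub_cancel] at bernoulli
    rw [abs_of_nonpos (by linarith), abs_of_nonneg hq₀]
    nlinarith
  · have bernoulli := rpow_one_add_le_one_add_mul_self hs (p := q + 1) (by linarith) (by linarith)
    have hle : τ ≤ τ ^ (q + 1) := by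
      simpa using Real.rpow_le_rpow_of_exponent_ge hτ₀ hτ₁ (show q + 1 ≤ 1 by linarith)
    rw [add_sub_cancel] at bernoulli
    rw [abs_of_nonneg (by linarith), abs_of_nonpos hq₀]
    nlinarith

theorem abs_mul_rpow_sub_rpow_le {x y q : ℝ} (hx : 0 ≤ x) (hxy : x ≤ y) (hq : -1 ≤ q) :
    |x * (x ^ q - y ^ q)| ≤ |q| * (y ^ q * (y - x)) := by
  rcases hx.eq_or_lt with rfl | hx
  · simpa using mul_nonneg (abs_nonneg q) (mul_nonneg (Real.rpow_nonneg hxy q) hxy)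
  have hy : 0 < y := hx.trans_le hxy
  set τ := x / y with hτ
  have hxτ : x = τ * y := by rw [hτ, div_mul_cancel₀ x hy.ne']
  have hyq : 0 < y ^ q * y := by positivity
  have hlhs : x * (x ^ q - y ^ q) = (τ ^ (q + 1) - τ) * (y ^ q * y) := by
    rw [hxτ, Real.mul_rpow (by positivity) hy.le, Real.rpow_add_one (by positivity)]
    ring
  have hrhs : |q| * (y ^ q * (y - x)) = |q| * (1 - τ) * (y ^ q * y) := by rw [hxτ]; ring
  rw [hlhs, hrhs, abs_mul, abs_of_pos hyq]
  exact mul_le_mul_of_nonneg_right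
    (abs_rpow_sub_self_le (by positivity) (div_le_one_of_le₀ hxy hy.le) hq) hyq.le

/-- Both `(φ_p)_a'(r)` and `|F_p(X)|` have this form, with `q = p - 2` and `q = (p - 2)/2`. -/
noncomputable def shiftPowMul (b q x : ℝ) : ℝ := (b + x) ^ q * x

section ShiftPowMul

variable {b q s t E ε : ℝ}

theorem shiftPowMul_nonneg (hb : 0 ≤ b) (hs : 0 ≤ s) : 0 ≤ shiftPowMul b q s :=
  mul_nonneg (Real.rpow_nonneg (by linarith) q) hs

theorem shiftPowMul_sub_eq :
    shiftPowMul b q s - shiftPowMul b q t =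
      (b + s) ^ q * (s - t) - t * ((b + t) ^ q - (b + s) ^ q) := by
  unfold shiftPowMul; ring

theorem abs_mul_shift_rpow_sub_le (hb : 0 ≤ b) (ht : 0 ≤ t) (hts : t ≤ s) (hq : -1 ≤ q) :
    |t * ((b + t) ^ q - (b + s) ^ q)| ≤ |q| * ((b + s) ^ q * (s - t)) := by
  have h := abs_mul_rpow_sub_rpow_le (x := b + t) (y := b + s) (by linarith) (by linarith) hq
  rw [add_sub_add_left_eq_sub] at h
  refine le_trans ?_ h
  rw [abs_mul, abs_mul]
  exact mul_le_mul_of_nonneg_right (by rw [abs_of_nonneg ht, abs_of_nonneg (by linarith)]; linarith)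
    (abs_nonneg _)

theorem shiftPowMul_sub_le (hb : 0 ≤ b) (ht : 0 ≤ t) (hts : t ≤ s) (hq : -1 ≤ q) :
    shiftPowMul b q s - shiftPowMul b q t ≤ (1 + |q|) * ((b + s) ^ q * (s - t)) := by
  have h := abs_mul_shift_rpow_sub_le hb ht hts hq
  rw [shiftPowMul_sub_eq]
  linarith [neg_abs_le (t * ((b + t) ^ q - (b + s) ^ q))]

theorem mul_le_shiftPowMul_sub (hb : 0 ≤ b) (ht : 0 ≤ t) (hts : t ≤ s) (hε₀ : 0 ≤ ε)
    (hε₁ : ε ≤ 1) (hεq : ε ≤ 1 + q) :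
    ε * ((b + s) ^ q * (s - t)) ≤ shiftPowMul b q s - shiftPowMul b q t := by
  have hW : 0 ≤ (b + s) ^ q * (s - t) :=
    mul_nonneg (Real.rpow_nonneg (by linarith) q) (by linarith)
  rw [shiftPowMul_sub_eq]
  rcases le_total 0 q with hq | hq
  · have hmono : (b + t) ^ q ≤ (b + s) ^ q := Real.rpow_le_rpow (by linarith) (by linarith) hq
    nlinarith
  · have h := abs_mul_shift_rpow_sub_le hb ht hts (q := q) (by linarith)
    rw [abs_of_nonpos hq] at h
    nlinarith [le_abs_self (t * ((b + t) ^ q - (b + s) ^ q))]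

theorem shiftPowMul_monotoneOn (hb : 0 ≤ b) (hq : -1 ≤ q) : MonotoneOn (shiftPowMul b q) (Ici 0) :=
  fun t ht s _ hts => by
    linarith [mul_le_shiftPowMul_sub (ε := 0) (q := q) hb ht hts le_rfl zero_le_one (by linarith)]

theorem comparable_shiftPowMul_sub (hb : 0 ≤ b) (ht : 0 ≤ t) (hts : t ≤ s) (hqE : |q| ≤ E)
    (hε₀ : 0 < ε) (hε₁ : ε ≤ 1) (hεq : ε ≤ 1 + q) :
    Comparable ((1 + E) / ε) (shiftPowMul b q s - shiftPowMul b q t) ((b + s) ^ q * (s - t)) := by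
  have hW : 0 ≤ (b + s) ^ q * (s - t) :=
    mul_nonneg (Real.rpow_nonneg (by linarith) q) (by linarith)
  have hupper := shiftPowMul_sub_le hb ht hts (q := q) (by linarith [neg_abs_le q])
  have hlower := mul_le_shiftPowMul_sub hb ht hts hε₀.le hε₁ hεq
  have hE : 0 ≤ E := (abs_nonneg q).trans hqE
  have hK : 1 + E ≤ (1 + E) / ε := le_div_self (by linarith) hε₀ hε₁
  have hD : 0 ≤ shiftPowMul b q s - shiftPowMul b q t := (mul_nonneg hε₀.le hW).trans hlower
  constructor
  · nlinarith
  · rw [div_mul_eq_mul_div, le_div_iff₀ hε₀]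
    nlinarith [mul_nonneg hE hD]

theorem comparable_shiftPowMul_add (hb : 0 ≤ b) (ht : 0 ≤ t) (hts : t ≤ s) (hq : -1 ≤ q) :
    Comparable 2 (shiftPowMul b q s + shiftPowMul b q t) ((b + s) ^ q * (s + t)) := by
  have hmono := shiftPowMul_monotoneOn hb hq ht (ht.trans hts : 0 ≤ s) hts
  have hg := shiftPowMul_nonneg hb ht (q := q)
  have hy : 0 ≤ (b + s) ^ q := Real.rpow_nonneg (by linarith) q
  unfold shiftPowMul at *
  constructor <;> nlinarith

theorem comparable_rpow_add_add (hb : 0 ≤ b) (ht : 0 ≤ t) (hts : t ≤ s) (hqE : |q| ≤ E) :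
    Comparable (2 ^ E) ((b + s) ^ q) ((b + s + t) ^ q) := by
  have h : Comparable 2 (b + s) (b + s + t) := ⟨by linarith, by linarith⟩
  exact (h.rpow one_le_two (by linarith) (by linarith) q).mono
    (Real.rpow_le_rpow_of_exponent_le one_le_two hqE) (Real.rpow_nonneg (by linarith) q)
    (Real.rpow_nonneg (by linarith) q)

theorem comparable_sq_shiftPowMul_sub (hb : 0 ≤ b) (hs : 0 ≤ s) (ht : 0 ≤ t) (hqE : |q| ≤ E)
    (hε₀ : 0 < ε) (hε₁ : ε ≤ 1) (hεq : ε ≤ 1 + q) :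
    Comparable (((1 + E) / ε * 2 ^ E) ^ 2) ((shiftPowMul b q s - shiftPowMul b q t) ^ 2)
      (((b + s + t) ^ q) ^ 2 * (s - t) ^ 2) := by
  wlog hts : t ≤ s generalizing s t
  · have h := this ht hs (le_of_not_ge hts)
    rwa [← neg_sub, neg_sq, ← neg_sub s, neg_sq, add_right_comm] at h
  have hE : 0 ≤ E := (abs_nonneg q).trans hqE
  have hq : -1 ≤ q := by linarith
  have h := (comparable_shiftPowMul_sub hb ht hts hqE hε₀ hε₁ hεq).trans (by positivity)
    (by positivity) ((comparable_rpow_add_add hb ht hts hqE).mul_right (sub_nonneg.2 hts))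
  rw [← mul_pow]
  exact h.sq (sub_nonneg.2 (shiftPowMul_monotoneOn hb hq ht hs hts))
    (mul_nonneg (Real.rpow_nonneg (by linarith) q) (sub_nonneg.2 hts))

theorem comparable_sq_shiftPowMul_add (hb : 0 ≤ b) (hs : 0 ≤ s) (ht : 0 ≤ t) (hqE : |q| ≤ E)
    (hq : -1 ≤ q) :
    Comparable ((2 * 2 ^ E) ^ 2) ((shiftPowMul b q s + shiftPowMul b q t) ^ 2)
      (((b + s + t) ^ q) ^ 2 * (s + t) ^ 2) := by
  wlog hts : t ≤ s generalizing s t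
  · have h := this ht hs (le_of_not_ge hts)
    rwa [add_comm (shiftPowMul b q t), add_comm t, add_right_comm] at h
  have h := (comparable_shiftPowMul_add hb ht hts hq).trans zero_le_two (by positivity)
    ((comparable_rpow_add_add hb ht hts hqE).mul_right (add_nonneg hs ht))
  rw [← mul_pow]
  exact h.sq (add_nonneg (shiftPowMul_nonneg hb hs) (shiftPowMul_nonneg hb ht))
    (mul_nonneg (Real.rpow_nonneg (by linarith) q) (add_nonneg hs ht))

end ShiftPowMul

/-- Both sides are affine in `⟪X, Y⟫_ℝ ∈ [-‖X‖ * ‖Y‖, ‖X‖ * ‖Y‖]`; the hypotheses are the two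
endpoint cases. -/
theorem comparable_norm_smul_sub_smul_sq {V : Type*} [NormedAddCommGroup V]
    [InnerProductSpace ℝ V] {K w a c : ℝ} (X Y : V)
    (hsub : Comparable K ((a * ‖X‖ - c * ‖Y‖) ^ 2) (w * (‖X‖ - ‖Y‖) ^ 2))
    (hadd : Comparable K ((a * ‖X‖ + c * ‖Y‖) ^ 2) (w * (‖X‖ + ‖Y‖) ^ 2)) :
    Comparable K (‖a • X - c • Y‖ ^ 2) (w * ‖X - Y‖ ^ 2) := by
  have hinner := abs_le.1 (abs_real_inner_le_norm X Y)
  have h := Comparable.of_affine (α := a ^ 2 * ‖X‖ ^ 2 + c ^ 2 * ‖Y‖ ^ 2) (β := -2 * a * c)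
    (γ := w * (‖X‖ ^ 2 + ‖Y‖ ^ 2)) (η := -2 * w) (by convert hadd using 1 <;> ring)
    (by convert hsub using 1 <;> ring) hinner
  convert h using 1
  · rw [norm_sub_sq_real, norm_smul, norm_smul, real_inner_smul_left, real_inner_smul_right,
      Real.norm_eq_abs, Real.norm_eq_abs, mul_pow, mul_pow, sq_abs, sq_abs]
    ring
  · rw [norm_sub_sq_real]
    ring

theorem comparable_norm_shift_smul_sub_sq {V : Type*} [NormedAddCommGroup V]
    [InnerProductSpace ℝ V] {δ q E ε : ℝ} (hδ : 0 ≤ δ) (hqE : |q| ≤ E) (hε₀ : 0 < ε)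
    (hε₁ : ε ≤ 1) (hεq : ε ≤ 1 + q) (X Y : V) :
    Comparable ((2 * (1 + E) / ε * 2 ^ E) ^ 2) (‖(δ + ‖X‖) ^ q • X - (δ + ‖Y‖) ^ q • Y‖ ^ 2)
      (((δ + ‖X‖ + ‖Y‖) ^ q) ^ 2 * ‖X - Y‖ ^ 2) := by
  have hE : 0 ≤ E := (abs_nonneg q).trans hqE
  have hK : 1 + E ≤ (1 + E) / ε := le_div_self (by linarith) hε₀ hε₁
  refine comparable_norm_smul_sub_smul_sq X Y ?_ ?_
  · refine (comparable_sq_shiftPowMul_sub hδ (norm_nonneg X) (norm_nonneg Y) hqE hε₀ hε₁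
      hεq).mono ?_ (sq_nonneg _) (by positivity)
    gcongr
    linarith
  · refine (comparable_sq_shiftPowMul_add hδ (norm_nonneg X) (norm_nonneg Y) hqE
      (by linarith)).mono ?_ (sq_nonneg _) (by positivity)
    gcongr
    rw [mul_div_assoc]
    linarith

theorem MonotoneOn.intervalIntegrable_of_Icc {f : ℝ → ℝ} {a b : ℝ} (hab : a ≤ b)
    (hf : MonotoneOn f (Icc a b)) : IntervalIntegrable f volume a b :=
  (uIcc_of_le hab ▸ hf).intervalIntegrable

theorem MonotoneOn.intervalIntegral_le_mul {f : ℝ → ℝ} {a b : ℝ} (hab : a ≤ b)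
    (hf : MonotoneOn f (Icc a b)) : ∫ x in a..b, f x ≤ (b - a) * f b := by
  simpa using intervalIntegral.integral_mono_on hab (hf.intervalIntegrable_of_Icc hab)
    intervalIntegrable_const
    fun x hx => hf hx (right_mem_Icc.2 hab) hx.2

theorem MonotoneOn.mul_le_intervalIntegral {f : ℝ → ℝ} {a b : ℝ} (hab : a ≤ b)
    (hf : MonotoneOn f (Icc a b)) : (b - a) * f a ≤ ∫ x in a..b, f x := by
  simpa using intervalIntegral.integral_mono_on hab intervalIntegrable_const
    (hf.intervalIntegrable_of_Icc hab)
    fun x hx => hf (left_mem_Icc.2 hab) hx hx.1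

theorem comparable_phiShift {δ p a r E : ℝ} (hδ : 0 ≤ δ) (ha : 0 ≤ a) (hr : 0 ≤ r) (hp : 1 ≤ p)
    (hpE : |p - 2| ≤ E) :
    Comparable (4 * 2 ^ E) (phiShift δ p a r) ((δ + a + r) ^ (p - 2) * r ^ 2) := by
  have hb : 0 ≤ δ + a := by linarith
  have hE : 0 ≤ E := (abs_nonneg _).trans hpE
  have h2E : 1 ≤ (2 : ℝ) ^ E := Real.one_le_rpow one_le_two hE
  have hg : MonotoneOn (shiftPowMul (δ + a) (p - 2)) (Icc 0 r) :=
    (shiftPowMul_monotoneOn hb (by linarith)).mono Icc_subset_Ici_self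
  have hphi : phiShift δ p a r = ∫ x in 0..r, shiftPowMul (δ + a) (p - 2) x := rfl
  have hW : 0 ≤ (δ + a + r) ^ (p - 2) * r ^ 2 := by positivity
  constructor
  · have h := hg.intervalIntegral_le_mul hr
    rw [hphi]
    calc _ ≤ (r - 0) * shiftPowMul (δ + a) (p - 2) r := h
      _ = (δ + a + r) ^ (p - 2) * r ^ 2 := by rw [shiftPowMul]; ring
      _ ≤ _ := le_mul_of_one_le_left hW (by linarith)
  · have hhalf : r / 2 ∈ Icc 0 r := ⟨by linarith, by linarith⟩
    have hleft := (hg.mono (Icc_subset_Icc_right hhalf.2)).mul_le_intervalIntegral hhalf.1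
    have hright := (hg.mono (Icc_subset_Icc_left hhalf.1)).mul_le_intervalIntegral hhalf.2
    have hsplit := intervalIntegral.integral_add_adjacent_intervals
      ((hg.mono (Icc_subset_Icc_right hhalf.2)).intervalIntegrable_of_Icc hhalf.1)
      ((hg.mono (Icc_subset_Icc_left hhalf.1)).intervalIntegrable_of_Icc hhalf.2)
    have hshift : (δ + a + r) ^ (p - 2) ≤ 2 ^ E * (δ + a + r / 2) ^ (p - 2) := by
      have h : Comparable 2 (δ + a + r) (δ + a + r / 2) := ⟨by linarith, by linarith⟩
      exact (h.rpow_le one_le_two (by linarith) _).trans (mul_le_mul_of_nonneg_right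
        (Real.rpow_le_rpow_of_exponent_le one_le_two hpE) (by positivity))
    simp only [shiftPowMul, add_zero, mul_zero] at hleft hright
    rw [hphi, ← hsplit]
    unfold shiftPowMul
    nlinarith

noncomputable def comparabilityConst (E ε : ℝ) : ℝ :=
  (2 * (1 + E) / ε * 2 ^ E) ^ 2 * 2 ^ E * (4 * 2 ^ E)

theorem one_le_comparabilityConst {E ε : ℝ} (hE : 0 ≤ E) (hε₀ : 0 < ε) (hε₁ : ε ≤ 1) :
    1 ≤ comparabilityConst E ε := by
  have h2E : 1 ≤ (2 : ℝ) ^ E := Real.one_le_rpow one_le_two hE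
  have hK : 1 ≤ 2 * (1 + E) / ε * 2 ^ E :=
    one_le_mul_of_one_le_of_one_le ((one_le_div hε₀).2 (by linarith)) h2E
  unfold comparabilityConst
  nlinarith [one_le_pow₀ (n := 2) hK, mul_le_mul h2E h2E zero_le_one (by positivity)]

theorem comparable_norm_shift_smul_sub_sq_phiShift {V : Type*} [NormedAddCommGroup V]
    [InnerProductSpace ℝ V] {δ p E ε : ℝ} (hδ : 0 ≤ δ) (hp : 1 ≤ p) (hpE : |p - 2| ≤ E)
    (hε₀ : 0 < ε) (hε₁ : ε ≤ 1) (hεp : 2 * ε ≤ p) (X Y : V) :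
    Comparable (comparabilityConst E ε)
      (‖(δ + ‖X‖) ^ ((p - 2) / 2) • X - (δ + ‖Y‖) ^ ((p - 2) / 2) • Y‖ ^ 2)
      (phiShift δ p ‖X‖ ‖X - Y‖) := by
  have hE : 0 ≤ E := (abs_nonneg _).trans hpE
  have hqE : |(p - 2) / 2| ≤ E := by rw [abs_div, abs_two]; linarith [abs_nonneg (p - 2)]
  have hF := comparable_norm_shift_smul_sub_sq hδ hqE hε₀ hε₁ (by linarith) X Y
  rw [← Real.rpow_mul_natCast (by positivity), Nat.cast_ofNat, div_mul_cancel₀ _ two_ne_zero]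
    at hF
  have hsum : Comparable 2 (δ + ‖X‖ + ‖Y‖) (δ + ‖X‖ + ‖X - Y‖) :=
    ⟨by linarith [norm_le_insert X Y, norm_nonneg (X - Y)],
      by linarith [norm_sub_le X Y, norm_nonneg Y]⟩
  have hweight := ((hsum.rpow one_le_two (by positivity) (by positivity) (p - 2)).mono
    (Real.rpow_le_rpow_of_exponent_le one_le_two hpE) (by positivity) (by positivity)).mul_right
    (sq_nonneg ‖X - Y‖)
  have hphi := comparable_phiShift hδ (norm_nonneg X) (norm_nonneg (X - Y)) hp hpE
  exact (hF.trans (by positivity) (by positivity) hweight).trans (by positivity) (by positivity)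
    hphi.symm

noncomputable def frobVec {d : ℕ} (A : Matrix (Fin d) (Fin d) ℝ) :
    EuclideanSpace ℝ (Fin d × Fin d) :=
  WithLp.toLp 2 fun ij => A ij.1 ij.2

theorem frob_eq_norm_frobVec {d : ℕ} (A : Matrix (Fin d) (Fin d) ℝ) : frob A = ‖frobVec A‖ := by
  simp [frob, frobVec, EuclideanSpace.norm_eq, Fintype.sum_prod_type]

theorem frobVec_smul {d : ℕ} (a : ℝ) (A : Matrix (Fin d) (Fin d) ℝ) :
    frobVec (a • A) = a • frobVec A := by
  ext ij
  simp [frobVec]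

theorem frobVec_sub {d : ℕ} (A B : Matrix (Fin d) (Fin d) ℝ) :
    frobVec (A - B) = frobVec A - frobVec B := by
  ext ij
  simp [frobVec]

theorem comparable_frob_Fmap_sub_phiShift {d : ℕ} {δ p E ε : ℝ} (hδ : 0 ≤ δ) (hp : 1 ≤ p)
    (hpE : |p - 2| ≤ E) (hε₀ : 0 < ε) (hε₁ : ε ≤ 1) (hεp : 2 * ε ≤ p)
    (A B : Matrix (Fin d) (Fin d) ℝ) :
    Comparable (comparabilityConst E ε) (frob (Fmap δ p A - Fmap δ p B) ^ 2)
      (phiShift δ p (frob (msym A)) (frob (msym A - msym B))) := by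
  simp only [Fmap, frob_eq_norm_frobVec, frobVec_sub, frobVec_smul]
  exact comparable_norm_shift_smul_sub_sq_phiShift hδ hp hpE hε₀ hε₁ hεp _ _

theorem stmt5_general (d : ℕ) (δ pm pp : ℝ) (hδ : 0 ≤ δ) (hpm : 1 < pm)
    (hpmpp : pm ≤ pp) :
    ∃ c : ℝ, 1 ≤ c ∧ ∀ p : ℝ, pm ≤ p → p ≤ pp → ∀ A B : Matrix (Fin d) (Fin d) ℝ,
      c⁻¹ * phiShift δ p (frob (msym A)) (frob (msym A - msym B)) ≤
          frob (Fmap δ p A - Fmap δ p B) ^ 2 ∧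
      frob (Fmap δ p A - Fmap δ p B) ^ 2 ≤
          c * phiShift δ p (frob (msym A)) (frob (msym A - msym B)) := by
  set ε := min 1 (pm / 2)
  have hε₀ : 0 < ε := lt_min one_pos (by linarith)
  have hε₁ : ε ≤ 1 := min_le_left _ _
  have hc := one_le_comparabilityConst (E := pp) (by linarith) hε₀ hε₁
  refine ⟨comparabilityConst pp ε, hc, fun p hp₁ hp₂ A B => ?_⟩
  have h := comparable_frob_Fmap_sub_phiShift (E := pp) hδ (by linarith)
    (abs_sub_le_iff.2 ⟨by linarith, by linarith⟩) hε₀ hε₁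
    (by linarith [min_le_right 1 (pm / 2)]) A B
  exact ⟨(inv_mul_le_iff₀ (by linarith)).2 h.2, h.1⟩

theorem stmt5 (d : ℕ) (hd : 1 ≤ d) (δ pm pp : ℝ) (hδ : 0 ≤ δ) (hpm : 1 < pm)
    (hpmpp : pm ≤ pp) :
    ∃ c : ℝ, 1 ≤ c ∧ ∀ p : ℝ, pm ≤ p → p ≤ pp → ∀ A B : Matrix (Fin d) (Fin d) ℝ,
      c⁻¹ * phiShift δ p (frob (msym A)) (frob (msym A - msym B)) ≤
          frob (Fmap δ p A - Fmap δ p B) ^ 2 ∧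
      frob (Fmap δ p A - Fmap δ p B) ^ 2 ≤
          c * phiShift δ p (frob (msym A)) (frob (msym A - msym B)) :=
  stmt5_general d δ pm pp hδ hpm hpmpp
end
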